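/- arXiv:1304.1605 — 3 statements merged into one kernel-verified Lean document; each statement's English description precedes it below -/
import Mathlib

section
/- Let Ω be a properly convex open domain in S^n (or ℝP^n), let S₁, ..., S_{l} be projective subspaces corresponding to linear subspaces V₁, ..., V_l of ℝ^{n+1} with Vᵢ ∩ Vⱼ = {0} for i ≠ j and V₁ ⊕ ⋯ ⊕ V_l = ℝ^{n+1}, and let G be a set of projective automorphisms preserving Ω and each Sᵢ. Set Ωᵢ := cl(Ω) ∩ Sᵢ. Assume: (a) for each i, the restrictions {g|Sᵢ : g ∈ G} form a bounded set of projective automorphisms of Sᵢ; and (b) for each i there is a sequence g_{i,j} ∈ G whose largest eigenvalue norm restricted to Sᵢ (relative to a normalization making the restrictions to the other factors bounded) tends to infinity. Then each Ωᵢ is nonempty and cl(Ω) equals the strict join Ω₁ * ⋯ * Ω_l. -/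
/-- A properly convex open cone in `ℝ^{n+1}` (the cone over a properly convex domain
in `S^n`/`ℝP^n`). -/
def IsProperConvexCone {n : ℕ} (C : Set (EuclideanSpace ℝ (Fin (n + 1)))) : Prop :=
  IsOpen C ∧ Convex ℝ C ∧ C.Nonempty ∧ (0 : EuclideanSpace ℝ (Fin (n + 1))) ∉ C ∧
    (∀ r : ℝ, 0 < r → ∀ v ∈ C, r • v ∈ C) ∧
    ∀ v ∈ closure C, v ≠ 0 → -v ∉ closure C

/-!
Write `u ∈ closure C` as `u = ∑ k, x k` with `x k ∈ V k`, fix `i`, and rescale the sequence `g_j`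
of (b) by its norm `λ_j` on `V i`. By (a) the maps `λ_j⁻¹ g_j` are uniformly bi-Lipschitz on
`V i`, while they send the other components to `0`. Hence a limit point `p` of `λ_j⁻¹ g_j u` lies
in `closure C ∩ V i`, and pulling `p` back by the uniformly bounded inverses recovers `x i`, so
`x i ∈ closure C`. Applied to the points of the open cone `C` near `u`, this also yields a nonzero
point of `closure C ∩ V i` (note `V i ≠ 0` since `λ_j → ∞`).
-/

open Filter Topology Set

section BoundedOrbit

variable {ι 𝕜 E F : Type*} [NormedField 𝕜] [AddCommGroup E] [Module 𝕜 E]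
  [SeminormedAddCommGroup F] [NormedSpace 𝕜 F]

def boundedOrbitSubmodule (g : ι → E →ₗ[𝕜] F) : Submodule 𝕜 E where
  carrier := {x | ∃ C, ∀ j, ‖g j x‖ ≤ C}
  zero_mem' := ⟨0, fun j => by simp⟩
  add_mem' := by
    rintro x y ⟨Cx, hx⟩ ⟨Cy, hy⟩
    refine ⟨Cx + Cy, fun j => ?_⟩
    rw [map_add]
    exact (norm_add_le _ _).trans (add_le_add (hx j) (hy j))
  smul_mem' := by
    rintro c x ⟨C, hC⟩
    refine ⟨‖c‖ * C, fun j => ?_⟩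
    rw [map_smul, norm_smul]
    exact mul_le_mul_of_nonneg_left (hC j) (norm_nonneg c)

end BoundedOrbit

section SupNormOn

variable {E F : Type*} [NormedAddCommGroup E] [NormedSpace ℝ E] [NormedAddCommGroup F]
  [NormedSpace ℝ F]

/-- On `W = ⊥` the set is empty and its `sSup` is `0`. -/
noncomputable def supNormOn (W : Submodule ℝ E) (f : E →ₗ[ℝ] F) : ℝ :=
  sSup {r : ℝ | ∃ v, v ∈ W ∧ ‖v‖ = 1 ∧ r = ‖f v‖}

theorem norm_apply_eq_norm_mul_norm_apply_inv_norm_smul (f : E →ₗ[ℝ] F) (v : E) :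
    ‖f v‖ = ‖v‖ * ‖f (‖v‖⁻¹ • v)‖ := by
  rcases eq_or_ne v 0 with rfl | hv
  · simp
  rw [map_smul, norm_smul, norm_inv, norm_norm, ← mul_assoc,
    mul_inv_cancel₀ (norm_ne_zero_iff.mpr hv), one_mul]

theorem norm_apply_le_supNormOn_mul [FiniteDimensional ℝ E] (f : E →ₗ[ℝ] F) {W : Submodule ℝ E}
    {v : E} (hv : v ∈ W) : ‖f v‖ ≤ supNormOn W f * ‖v‖ := by
  rcases eq_or_ne v 0 with rfl | hv0
  · simp
  have hbdd : BddAbove {r : ℝ | ∃ v, v ∈ W ∧ ‖v‖ = 1 ∧ r = ‖f v‖} := by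
    refine ⟨‖LinearMap.toContinuousLinearMap f‖, ?_⟩
    rintro _ ⟨u, -, hu, rfl⟩
    simpa [hu] using (LinearMap.toContinuousLinearMap f).le_opNorm u
  have hle : ‖f (‖v‖⁻¹ • v)‖ ≤ supNormOn W f :=
    le_csSup hbdd ⟨_, W.smul_mem _ hv, norm_smul_inv_norm hv0, rfl⟩
  rw [norm_apply_eq_norm_mul_norm_apply_inv_norm_smul, mul_comm]
  exact mul_le_mul_of_nonneg_right hle (norm_nonneg v)

theorem supNormOn_mul_norm_le {f : E →ₗ[ℝ] F} {W : Submodule ℝ E} {M : ℝ}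
    (hM : ∀ v ∈ W, ∀ w ∈ W, ‖v‖ = 1 → ‖w‖ = 1 → ‖f v‖ ≤ M * ‖f w‖) {v : E} (hv : v ∈ W) :
    supNormOn W f * ‖v‖ ≤ M * ‖f v‖ := by
  rcases eq_or_ne v 0 with rfl | hv0
  · simp
  have hw : ‖v‖⁻¹ • v ∈ W ∧ ‖‖v‖⁻¹ • v‖ = 1 := ⟨W.smul_mem _ hv, norm_smul_inv_norm hv0⟩
  have hle : supNormOn W f ≤ M * ‖f (‖v‖⁻¹ • v)‖ := by
    refine csSup_le ⟨_, _, hw.1, hw.2, rfl⟩ ?_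
    rintro _ ⟨u, hu, hu1, rfl⟩
    exact hM u hu _ hw.1 hu1 hw.2
  calc supNormOn W f * ‖v‖ ≤ M * ‖f (‖v‖⁻¹ • v)‖ * ‖v‖ :=
        mul_le_mul_of_nonneg_right hle (norm_nonneg v)
    _ = M * ‖f v‖ := by rw [norm_apply_eq_norm_mul_norm_apply_inv_norm_smul f v]; ring

theorem ne_bot_of_tendsto_supNormOn {ι : Type*} {l : Filter ι} [l.NeBot] {W : Submodule ℝ E}
    {f : ι → E →ₗ[ℝ] F} (h : Tendsto (fun j => supNormOn W (f j)) l atTop) : W ≠ ⊥ := by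
  rintro rfl
  have hzero : ∀ j, supNormOn ⊥ (f j) = 0 := fun j => by simp [supNormOn]
  simp only [hzero] at h
  exact not_tendsto_const_atTop _ _ h

theorem supNormOn_pos [FiniteDimensional ℝ E] {f : E →ₗ[ℝ] F} (hf : Function.Injective f)
    {W : Submodule ℝ E} (hW : W ≠ ⊥) : 0 < supNormOn W f := by
  obtain ⟨v, hv, hv0⟩ := W.ne_bot_iff.mp hW
  have hfv : 0 < ‖f v‖ := norm_pos_iff.mpr ((map_ne_zero_iff f hf).mpr hv0)
  exact pos_of_mul_pos_left (hfv.trans_le (norm_apply_le_supNormOn_mul f hv)) (norm_nonneg v)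

end SupNormOn

section Rescaling

variable {E : Type*} [NormedAddCommGroup E] [NormedSpace ℝ E] [FiniteDimensional ℝ E]

theorem mem_of_add_mem_of_tendsto_zero {K : Set E} (hK : IsClosed K) {W : Submodule ℝ E}
    (h : ℕ → E ≃ₗ[ℝ] E) (hhK : ∀ j, MapsTo (h j) K K) (hhK' : ∀ j, MapsTo (h j).symm K K)
    {M : ℝ} (hsymm : ∀ j, ∀ w ∈ W, ‖(h j).symm w‖ ≤ M * ‖w‖) {y z : E}
    (hyW : ∀ j, h j y ∈ W) (hy : ∃ C, ∀ j, ‖h j y‖ ≤ C)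
    (hz : Tendsto (fun j => h j z) atTop (𝓝 0)) (hyz : y + z ∈ K) : y ∈ K := by
  obtain ⟨C, hC⟩ := hy
  obtain ⟨p, -, φ, hφ, hp⟩ := tendsto_subseq_of_bounded
    (Metric.isBounded_closedBall (x := 0) (r := C)) (x := fun j => h j y)
    (fun j => mem_closedBall_zero_iff.mpr (hC j))
  have hpK : p ∈ K := by
    refine hK.mem_of_tendsto (by simpa using hp.add (hz.comp hφ.tendsto_atTop))
      (Eventually.of_forall fun j => ?_)
    simpa using hhK (φ j) hyz
  have hpW : p ∈ W :=
    W.closed_of_finiteDimensional.mem_of_tendsto hp (Eventually.of_forall fun j => hyW (φ j))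
  have hback : Tendsto (fun j => (h (φ j)).symm p) atTop (𝓝 y) := by
    rw [tendsto_iff_norm_sub_tendsto_zero]
    refine squeeze_zero (fun _ => norm_nonneg _) (fun j => ?_)
      (by simpa using (tendsto_iff_norm_sub_tendsto_zero.mp hp).const_mul M)
    calc ‖(h (φ j)).symm p - y‖ = ‖(h (φ j)).symm (p - h (φ j) y)‖ := by simp
      _ ≤ M * ‖h (φ j) y - p‖ := by
        rw [norm_sub_rev (h (φ j) y)]; exact hsymm _ _ (W.sub_mem hpW (hyW _))
  exact hK.mem_of_tendsto hback (Eventually.of_forall fun j => hhK' _ hpK)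

theorem mem_of_sub_mem_boundedOrbitSubmodule {K : Set E} (hK : IsClosed K)
    (hKsmul : ∀ c : ℝ, 0 < c → ∀ v ∈ K, c • v ∈ K) {W : Submodule ℝ E} (g : ℕ → E ≃ₗ[ℝ] E)
    (hgK : ∀ j, g j '' K = K) (hgW : ∀ j, W.map (g j).toLinearMap = W) {M : ℝ}
    (hM : ∀ j, ∀ v ∈ W, ∀ w ∈ W, ‖v‖ = 1 → ‖w‖ = 1 → ‖g j v‖ ≤ M * ‖g j w‖)
    (hT : Tendsto (fun j => supNormOn W (g j).toLinearMap) atTop atTop) {u y : E} (hu : u ∈ K)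
    (hy : y ∈ W) (huy : u - y ∈ boundedOrbitSubmodule fun j => (g j).toLinearMap) : y ∈ K := by
  set lam := fun j => supNormOn W (g j).toLinearMap
  have hlam : ∀ j, 0 < lam j := fun j =>
    supNormOn_pos (g j).injective (ne_bot_of_tendsto_supNormOn hT)
  have hgWmem : ∀ j, ∀ w ∈ W, g j w ∈ W := fun j w hw => hgW j ▸ Submodule.mem_map_of_mem hw
  have hgsymmW : ∀ j, ∀ w ∈ W, (g j).symm w ∈ W := fun j w hw => by
    rw [← hgW j, Submodule.map_equiv_eq_comap_symm] at hw; exact hw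
  have hgsymmK : ∀ j, ∀ v ∈ K, (g j).symm v ∈ K := fun j v hv => by
    rw [← hgK j, LinearEquiv.image_eq_preimage_symm] at hv; exact hv
  let h j := (g j).trans (LinearEquiv.smulOfNeZero ℝ E (lam j)⁻¹ (inv_ne_zero (hlam j).ne'))
  have happly : ∀ j x, h j x = (lam j)⁻¹ • g j x := fun j x => rfl
  have hsymm : ∀ j x, (h j).symm x = lam j • (g j).symm x := fun j x => by
    rw [LinearEquiv.symm_apply_eq, happly, map_smul, LinearEquiv.apply_symm_apply, smul_smul,
      inv_mul_cancel₀ (hlam j).ne', one_smul]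
  refine mem_of_add_mem_of_tendsto_zero hK h (W := W) (M := M) (z := u - y) ?_ ?_ ?_ ?_ ?_ ?_
    (by simpa using hu)
  · intro j v hv
    rw [happly]
    exact hKsmul _ (inv_pos.mpr (hlam j)) _ (hgK j ▸ mem_image_of_mem _ hv)
  · intro j v hv
    rw [hsymm]
    exact hKsmul _ (hlam j) _ (hgsymmK j v hv)
  · intro j w hw
    have hle := supNormOn_mul_norm_le (hM j) (hgsymmW j w hw)
    rw [LinearEquiv.coe_coe, LinearEquiv.apply_symm_apply] at hle
    rwa [hsymm, norm_smul, Real.norm_of_nonneg (hlam j).le]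
  · intro j
    rw [happly]
    exact W.smul_mem _ (hgWmem j y hy)
  · refine ⟨‖y‖, fun j => ?_⟩
    rw [happly, norm_smul, Real.norm_of_nonneg (inv_pos.mpr (hlam j)).le, inv_mul_le_iff₀ (hlam j)]
    exact norm_apply_le_supNormOn_mul (g j).toLinearMap hy
  · obtain ⟨C, hC⟩ := huy
    exact (tendsto_inv_atTop_zero.comp hT).zero_smul_isBoundedUnder_le
      ⟨C, eventually_map.mpr (Eventually.of_forall hC)⟩

end Rescaling

section Cone

def convexConeOfSMulMem {E : Type*} [AddCommGroup E] [Module ℝ E] {C : Set E} (hconv : Convex ℝ C)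
    (hsmul : ∀ r : ℝ, 0 < r → ∀ v ∈ C, r • v ∈ C) : ConvexCone ℝ E where
  carrier := C
  smul_mem' r hr v hv := hsmul r hr v hv
  add_mem' x hx y hy := by
    have h := hsmul 2 two_pos _ (hconv hx hy (by norm_num : (0 : ℝ) ≤ 1 / 2)
      (by norm_num : (0 : ℝ) ≤ 1 / 2) (by norm_num))
    rwa [smul_add, smul_smul, smul_smul, show (2 : ℝ) * (1 / 2) = 1 by norm_num, one_smul,
      one_smul] at h

variable {E : Type*} [NormedAddCommGroup E] [NormedSpace ℝ E]

theorem zero_mem_closure_of_smul_mem {C : Set E} (hne : C.Nonempty)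
    (hsmul : ∀ r : ℝ, 0 < r → ∀ v ∈ C, r • v ∈ C) : (0 : E) ∈ closure C := by
  obtain ⟨u, hu⟩ := hne
  have hlim : Tendsto (fun t : ℝ => t • u) (𝓝[>] 0) (𝓝 0) := by
    simpa using (tendsto_id.smul_const u).mono_left (nhdsWithin_le_nhds (a := (0 : ℝ)))
  exact mem_closure_of_tendsto hlim (eventually_mem_nhdsWithin.mono fun t ht => hsmul t ht u hu)

theorem exists_ne_zero_mem_of_add_mem {K C : Set E} (hC : IsOpen C) {u y : E} (hu : u ∈ C)
    {W : Submodule ℝ E} (hW : W ≠ ⊥) (hy : y ∈ W) (h : ∀ e ∈ W, u + e ∈ C → y + e ∈ K) :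
    ∃ v, v ∈ K ∩ W ∧ v ≠ 0 := by
  by_cases hy0 : y = 0
  · obtain ⟨e, he, he0⟩ := W.ne_bot_iff.mp hW
    have hnear : ∀ᶠ t in 𝓝[>] (0 : ℝ), u + t • e ∈ C := nhdsWithin_le_nhds <|
      ((continuous_const.add (continuous_id.smul continuous_const)).tendsto' 0 u
        (by simp)).eventually (hC.mem_nhds hu)
    obtain ⟨t, hte, ht⟩ := (hnear.and self_mem_nhdsWithin).exists
    refine ⟨t • e, ⟨?_, W.smul_mem t he⟩, smul_ne_zero (ne_of_gt ht) he0⟩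
    simpa [hy0] using h _ (W.smul_mem t he) hte
  · exact ⟨y, ⟨by simpa using h 0 W.zero_mem (by simpa using hu), hy⟩, hy0⟩

end Cone

theorem exists_sum_eq_of_iSup_eq_top {ι R M : Type*} [Fintype ι] [Semiring R] [AddCommMonoid M]
    [Module R M] {V : ι → Submodule R M} (hV : ⨆ i, V i = ⊤) (u : M) :
    ∃ x : ι → M, (∀ i, x i ∈ V i) ∧ ∑ i, x i = u := by
  obtain ⟨x, hx⟩ := (Submodule.mem_iSup_finset_iff_exists_sum (s := Finset.univ) V u).mp
    (by simp [hV])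
  exact ⟨fun i => x i, fun i => (x i).2, hx⟩

theorem closure_eq_strict_join_of_bounded_and_unbounded_sequences_general
    (n l : ℕ)
    (V : Fin l → Submodule ℝ (EuclideanSpace ℝ (Fin (n + 1))))
    (hVspan : ⨆ i, V i = ⊤)
    (C : Set (EuclideanSpace ℝ (Fin (n + 1))))
    (hC : IsProperConvexCone C)
    (G : Set ((EuclideanSpace ℝ (Fin (n + 1))) ≃ₗ[ℝ] (EuclideanSpace ℝ (Fin (n + 1)))))
    (hGC : ∀ g ∈ G, (g : EuclideanSpace ℝ (Fin (n + 1)) → EuclideanSpace ℝ (Fin (n + 1))) '' C = C)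
    (hGV : ∀ g ∈ G, ∀ i, (V i).map g.toLinearMap = V i)
    (hbounded : ∀ i, ∃ M : ℝ, 0 < M ∧ ∀ g ∈ G, ∀ v ∈ V i, ∀ w ∈ V i,
        ‖v‖ = 1 → ‖w‖ = 1 → ‖g v‖ ≤ M * ‖g w‖)
    (hunbounded : ∀ i, ∃ gs : ℕ → ((EuclideanSpace ℝ (Fin (n + 1))) ≃ₗ[ℝ] (EuclideanSpace ℝ (Fin (n + 1)))),
        (∀ j, gs j ∈ G) ∧
        (∀ k, k ≠ i → ∃ M : ℝ, ∀ j, ∀ v ∈ V k, ‖(gs j) v‖ ≤ M * ‖v‖) ∧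
        Filter.Tendsto (fun j => sSup {r : ℝ | ∃ v, v ∈ V i ∧ ‖v‖ = 1 ∧ r = ‖(gs j) v‖})
          Filter.atTop Filter.atTop) :
    (∀ i, ∃ v, v ∈ closure C ∩ (V i : Set (EuclideanSpace ℝ (Fin (n + 1)))) ∧ v ≠ 0) ∧
    closure C = {u | ∃ x : Fin l → EuclideanSpace ℝ (Fin (n + 1)),
        (∀ i, x i ∈ closure C ∩ (V i : Set (EuclideanSpace ℝ (Fin (n + 1))))) ∧ u = ∑ i, x i} := by
  obtain ⟨hCopen, hCconv, ⟨u₀, hu₀⟩, -, hCsmul, -⟩ := hC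
  let K : PointedCone ℝ (EuclideanSpace ℝ (Fin (n + 1))) :=
    (convexConeOfSMulMem hCconv hCsmul).closure.toPointedCone
      (zero_mem_closure_of_smul_mem ⟨u₀, hu₀⟩ hCsmul)
  have hGK : ∀ g ∈ G, g '' closure C = closure C := fun g hg => by
    rw [← g.coe_toContinuousLinearEquiv', g.toContinuousLinearEquiv.image_closure,
      g.coe_toContinuousLinearEquiv', hGC g hg]
  have hproj : ∀ i, ∀ x : Fin l → EuclideanSpace ℝ (Fin (n + 1)), (∀ k, x k ∈ V k) →
      ∀ e ∈ V i, ∑ k, x k + e ∈ closure C → x i + e ∈ closure C := by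
    intro i x hxV e he hxK
    obtain ⟨M, -, hM⟩ := hbounded i
    obtain ⟨gs, hgsG, hgsB, hgsT⟩ := hunbounded i
    refine mem_of_sub_mem_boundedOrbitSubmodule isClosed_closure
      (fun c hc v hv => K.smul_mem hc.le hv) gs (fun j => hGK _ (hgsG j))
      (fun j => hGV _ (hgsG j) i) (fun j => hM _ (hgsG j)) hgsT hxK ((V i).add_mem (hxV i) he) ?_
    rw [add_sub_add_right_eq_sub, ← Finset.sum_erase_eq_sub (Finset.mem_univ i)]
    refine Submodule.sum_mem _ fun k hk => ?_
    obtain ⟨Mk, hMk⟩ := hgsB k (Finset.ne_of_mem_erase hk)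
    exact ⟨Mk * ‖x k‖, fun j => hMk j _ (hxV k)⟩
  refine ⟨fun i => ?_, Set.ext fun u => ⟨fun hu => ?_, ?_⟩⟩
  · obtain ⟨x, hxV, rfl⟩ := exists_sum_eq_of_iSup_eq_top hVspan u₀
    obtain ⟨gs, -, -, hgsT⟩ := hunbounded i
    exact exists_ne_zero_mem_of_add_mem hCopen hu₀ (ne_bot_of_tendsto_supNormOn hgsT) (hxV i)
      fun e he hxe => hproj i x hxV e he (subset_closure hxe)
  · obtain ⟨x, hxV, rfl⟩ := exists_sum_eq_of_iSup_eq_top hVspan u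
    exact ⟨x, fun i => ⟨by simpa using hproj i x hxV 0 (V i).zero_mem (by simpa using hu),
      hxV i⟩, rfl⟩
  · rintro ⟨x, hx, rfl⟩
    exact K.sum_mem fun i _ => (hx i).1

/-- (Lemma on decomposition into a strict join.)  Let `Ω = P(C)` be a
properly convex domain, `S i = P(V i)` independent spanning subspaces preserved by a
set `G` of projective automorphisms preserving `Ω`, with `Ω_i := cl(Ω) ∩ S i`.
If (a) the restrictions of `G` to each `S i` are projectively bounded and (b) for each
`i` there is a sequence in `G` whose largest eigenvalue norm on `S i` tends to infinity,
then each `Ω_i` is nonempty and `cl(Ω)` is the strict join `Ω₁ * ⋯ * Ω_l`. -/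
theorem closure_eq_strict_join_of_bounded_and_unbounded_sequences
    (n l : ℕ) (hl : 0 < l)
    (V : Fin l → Submodule ℝ (EuclideanSpace ℝ (Fin (n + 1))))
    (hVdisj : ∀ i j, i ≠ j → V i ⊓ V j = ⊥)
    (hVspan : ⨆ i, V i = ⊤)
    (C : Set (EuclideanSpace ℝ (Fin (n + 1))))
    (hC : IsProperConvexCone C)
    (G : Set ((EuclideanSpace ℝ (Fin (n + 1))) ≃ₗ[ℝ] (EuclideanSpace ℝ (Fin (n + 1)))))
    (hGC : ∀ g ∈ G, (g : EuclideanSpace ℝ (Fin (n + 1)) → EuclideanSpace ℝ (Fin (n + 1))) '' C = C)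
    (hGV : ∀ g ∈ G, ∀ i, (V i).map g.toLinearMap = V i)
    (hbounded : ∀ i, ∃ M : ℝ, 0 < M ∧ ∀ g ∈ G, ∀ v ∈ V i, ∀ w ∈ V i,
        ‖v‖ = 1 → ‖w‖ = 1 → ‖g v‖ ≤ M * ‖g w‖)
    (hunbounded : ∀ i, ∃ gs : ℕ → ((EuclideanSpace ℝ (Fin (n + 1))) ≃ₗ[ℝ] (EuclideanSpace ℝ (Fin (n + 1)))),
        (∀ j, gs j ∈ G) ∧
        (∀ k, k ≠ i → ∃ M : ℝ, ∀ j, ∀ v ∈ V k, ‖(gs j) v‖ ≤ M * ‖v‖) ∧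
        Filter.Tendsto (fun j => sSup {r : ℝ | ∃ v, v ∈ V i ∧ ‖v‖ = 1 ∧ r = ‖(gs j) v‖})
          Filter.atTop Filter.atTop) :
    (∀ i, ∃ v, v ∈ closure C ∩ (V i : Set (EuclideanSpace ℝ (Fin (n + 1)))) ∧ v ≠ 0) ∧
    closure C = {u | ∃ x : Fin l → EuclideanSpace ℝ (Fin (n + 1)),
        (∀ i, x i ∈ closure C ∩ (V i : Set (EuclideanSpace ℝ (Fin (n + 1))))) ∧ u = ∑ i, x i} :=
  closure_eq_strict_join_of_bounded_and_unbounded_sequences_general n l V hVspan C hC G hGC hGV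
    hbounded hunbounded
end

section
/- Let N(v), v ∈ ℝ^i, be the standard cusp matrices (rows (1,0,0), (vᵀ, Id_i, 0), (‖v‖²/2, v, 1)). Suppose g ∈ GL(i+2, ℝ) is a block lower-triangular matrix of the form with rows: (a₁, 0, 0), (a₄, A₅, 0), (a₇, a₈, a₉), where a₁, a₇, a₉ are scalars, a₄ a column i-vector, a₈ a row i-vector, A₅ an invertible i×i matrix, and suppose g normalizes the group {N(v)}: for each v there is v' with g·N(v) = N(v')·g. Then a₉·v = v'·A₅ for all v, and furthermore (1/|det A₅|^{1/i})·A₅ is an orthogonal matrix and a₅² = a₁·a₉ where a₅ := |det A₅|^{1/i}. -/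
/-- The standard cusp matrix `N(v)`. -/
noncomputable def cuspMat {i : ℕ} (v : Fin i → ℝ) :
    Matrix (Fin 1 ⊕ (Fin i ⊕ Fin 1)) (Fin 1 ⊕ (Fin i ⊕ Fin 1)) ℝ :=
  Matrix.fromBlocks 1 0
    (Matrix.of fun r (_ : Fin 1) => Sum.elim (fun j => v j) (fun _ => (∑ j, v j ^ 2) / 2) r)
    (Matrix.fromBlocks 1 0 (Matrix.of fun (_ : Fin 1) j => v j) 1)

/-- The block lower-triangular matrix with rows `(a₁, 0, 0)`, `(a₄, A₅, 0)`,
`(a₇, a₈, a₉)`. -/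
def gMat {i : ℕ} (a₁ : ℝ) (a₄ : Fin i → ℝ) (A₅ : Matrix (Fin i) (Fin i) ℝ)
    (a₇ : ℝ) (a₈ : Fin i → ℝ) (a₉ : ℝ) :
    Matrix (Fin 1 ⊕ (Fin i ⊕ Fin 1)) (Fin 1 ⊕ (Fin i ⊕ Fin 1)) ℝ :=
  Matrix.fromBlocks (Matrix.of fun _ _ => a₁) 0
    (Matrix.of fun r (_ : Fin 1) => Sum.elim (fun j => a₄ j) (fun _ => a₇) r)
    (Matrix.fromBlocks A₅ 0 (Matrix.of fun (_ : Fin 1) j => a₈ j)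
      (Matrix.of fun _ _ => a₉))

/-- If an invertible block lower-triangular `g` (as above) normalizes the
standard cusp group `{N(v)}`, then the conjugation parameter `v'` satisfies
`a₉ · v = v' · A₅` for all `v`; moreover `|det A₅|^{-1/i} · A₅` is orthogonal and
`a₅² = a₁ · a₉` where `a₅ = |det A₅|^{1/i}`. -/
theorem normalizer_of_cusp_group_structure
    (i : ℕ) (hi : 0 < i)
    (a₁ a₇ a₉ : ℝ) (a₄ a₈ : Fin i → ℝ) (A₅ : Matrix (Fin i) (Fin i) ℝ)
    (hA₅ : IsUnit A₅.det)
    (hg : IsUnit (gMat a₁ a₄ A₅ a₇ a₈ a₉).det)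
    (hnorm : ∀ v : Fin i → ℝ, ∃ v' : Fin i → ℝ,
      gMat a₁ a₄ A₅ a₇ a₈ a₉ * cuspMat v = cuspMat v' * gMat a₁ a₄ A₅ a₇ a₈ a₉) :
    (∀ v v' : Fin i → ℝ,
      gMat a₁ a₄ A₅ a₇ a₈ a₉ * cuspMat v = cuspMat v' * gMat a₁ a₄ A₅ a₇ a₈ a₉ →
        a₉ • v = Matrix.vecMul v' A₅) ∧
    ((|A₅.det| ^ ((1 : ℝ) / i))⁻¹ • A₅) ∈ Matrix.orthogonalGroup (Fin i) ℝ ∧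
    (|A₅.det| ^ ((1 : ℝ) / i)) ^ 2 = a₁ * a₉ := by
  -- Part 1: the (bottom-row, middle-column) block of the equation.
  have hvA : ∀ v v' : Fin i → ℝ,
      gMat a₁ a₄ A₅ a₇ a₈ a₉ * cuspMat v = cuspMat v' * gMat a₁ a₄ A₅ a₇ a₈ a₉ →
        a₉ • v = Matrix.vecMul v' A₅ := by
    intro v v' h
    funext j
    have := congrFun (congrFun h (Sum.inr (Sum.inr 0))) (Sum.inr (Sum.inl j))
    simp [gMat, cuspMat, Matrix.mul_apply, Fintype.sum_sum_type, Matrix.fromBlocks,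
      Matrix.vecMul, dotProduct, Matrix.one_apply] at this ⊢
    linarith
  -- The (middle-row, first-column) block of the equation.
  have hAv : ∀ v v' : Fin i → ℝ,
      gMat a₁ a₄ A₅ a₇ a₈ a₉ * cuspMat v = cuspMat v' * gMat a₁ a₄ A₅ a₇ a₈ a₉ →
        A₅.mulVec v = a₁ • v' := by
    intro v v' h
    funext k
    have := congrFun (congrFun h (Sum.inr (Sum.inl k))) (Sum.inl 0)
    simp [gMat, cuspMat, Matrix.mul_apply, Fintype.sum_sum_type, Matrix.fromBlocks,
      Matrix.mulVec, dotProduct, Matrix.one_apply] at this ⊢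
    linarith
  have hdetg : (gMat a₁ a₄ A₅ a₇ a₈ a₉).det = a₁ * (A₅.det * a₉) := by
    rw [gMat, Matrix.det_fromBlocks_zero₁₂, Matrix.det_fromBlocks_zero₁₂]
    simp [Matrix.det_fin_one]
  have hne : a₁ * a₉ ≠ 0 := by
    rw [hdetg] at hg
    have := hg.ne_zero
    intro hc
    apply this
    rcases mul_eq_zero.1 hc with h1 | h9
    · simp [h1]
    · simp [h9]
  -- The key identity A₅ᵀ * A₅ = (a₁ * a₉) • 1
  have key : A₅.transpose * A₅ = (a₁ * a₉) • (1 : Matrix (Fin i) (Fin i) ℝ) := by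
    have hmul : ∀ v : Fin i → ℝ, (A₅.transpose * A₅).mulVec v = (a₁ * a₉) • v := by
      intro v
      obtain ⟨v', hv'⟩ := hnorm v
      have h1 := hvA v v' hv'
      have h2 := hAv v v' hv'
      calc (A₅.transpose * A₅).mulVec v = A₅.transpose.mulVec (A₅.mulVec v) := by
              rw [← Matrix.mulVec_mulVec]
        _ = A₅.transpose.mulVec (a₁ • v') := by rw [h2]
        _ = a₁ • A₅.transpose.mulVec v' := by rw [Matrix.mulVec_smul]
        _ = a₁ • Matrix.vecMul v' A₅ := by rw [Matrix.mulVec_transpose]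
        _ = a₁ • (a₉ • v) := by rw [← h1]
        _ = (a₁ * a₉) • v := by rw [smul_smul]
    ext j k
    have := congrFun (hmul (Pi.single k 1)) j
    simpa [Matrix.mulVec_single, Matrix.one_apply, Pi.single_apply, eq_comm,
      mul_comm] using this
  have hpos : 0 < a₁ * a₉ := by
    have j : Fin i := ⟨0, hi⟩
    have hd := congrFun (congrFun key j) j
    have : (A₅.transpose * A₅) j j = ∑ k, A₅ k j ^ 2 := by
      simp [Matrix.mul_apply, Matrix.transpose_apply, sq]
    rw [this] at hd
    simp only [Matrix.smul_apply, Matrix.one_apply_eq, smul_eq_mul, mul_one] at hd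
    have h0 : 0 ≤ a₁ * a₉ := hd ▸ Finset.sum_nonneg fun k _ => sq_nonneg _
    rcases h0.lt_or_eq with h | h
    · exact h
    · exact absurd h.symm hne
  set t := a₁ * a₉ with ht
  -- determinant relation
  have hdet2 : A₅.det ^ 2 = t ^ i := by
    have := congrArg Matrix.det key
    rwa [Matrix.det_mul, Matrix.det_transpose, ← sq, Matrix.smul_one_eq_diagonal,
      Matrix.det_diagonal, Finset.prod_const, Finset.card_univ, Fintype.card_fin] at this
  have habs : |A₅.det| = t ^ ((i : ℝ) / 2) := by
    rw [← Real.sqrt_sq_eq_abs, hdet2, ← Real.rpow_natCast t i, Real.sqrt_eq_rpow,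
      ← Real.rpow_mul hpos.le]
    congr 1
    ring
  have hiR : (i : ℝ) ≠ 0 := Nat.cast_ne_zero.2 hi.ne'
  have ha5 : |A₅.det| ^ ((1 : ℝ) / i) = t ^ ((1 : ℝ) / 2) := by
    rw [habs, ← Real.rpow_mul hpos.le]
    congr 1
    field_simp
  have ha5sq : (|A₅.det| ^ ((1 : ℝ) / i)) ^ 2 = t := by
    rw [ha5, ← Real.rpow_natCast (t ^ ((1 : ℝ) / 2)) 2, ← Real.rpow_mul hpos.le]
    norm_num
  have ha5pos : 0 < |A₅.det| ^ ((1 : ℝ) / i) := by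
    rw [ha5]; exact Real.rpow_pos_of_pos hpos _
  refine ⟨hvA, ?_, ha5sq⟩
  rw [Matrix.mem_orthogonalGroup_iff']
  have hstar : star ((|A₅.det| ^ ((1 : ℝ) / i))⁻¹ • A₅)
      = (|A₅.det| ^ ((1 : ℝ) / i))⁻¹ • A₅.transpose := by
    simp [Matrix.star_eq_conjTranspose, Matrix.conjTranspose,
      Matrix.transpose_smul]
    rfl
  rw [Matrix.transpose_smul, Matrix.smul_mul, Matrix.mul_smul, key, smul_smul, smul_smul]
  have : (|A₅.det| ^ ((1 : ℝ) / i))⁻¹ * ((|A₅.det| ^ ((1 : ℝ) / i))⁻¹ * t) = 1 := by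
    rw [← ha5sq]; field_simp
  rw [mul_assoc, this, one_smul]
end

section
/- Let D be an open convex domain in an affine space Aⁿ ⊂ ℝP^n that is not properly convex (its closure contains a complete affine line). Then D contains a complete affine subspace of maximal dimension i ≥ 1, any two maximal complete affine subspaces contained in D are disjoint, and the maximal complete affine subspaces of D foliate D; their common boundary is a fixed projective subspace S^{i-1} contained in ∂D, invariant under any group of projective automorphisms of D. -/
/-!
For a convex set `D` and `x ∈ D`, the directions `w` with `x + ℝ • w ⊆ D` form a linear subspace.
For `D` open this subspace does not depend on `x`: if `closure D` contains a line `z + ℝ • w`,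
the point `x + ε • (z - x) + t • w` of the segment from `x` to `z + (t / ε) • w` tends to
`x + t • w` as `ε → 0`, so the parallel line through any `x ∈ closure D` lies in `closure D`;
and for `x` interior, the midpoint of `x` and a point of `closure D` is in `D`.
An affine automorphism of `D` maps complete lines to complete lines, hence
preserves this common subspace of directions.
-/

open Filter Topology Set

variable {E : Type*} [AddCommGroup E] [Module ℝ E]

def lineDirections (s : Set E) (x : E) : Set E := {w | ∀ t : ℝ, x + t • w ∈ s}

theorem mem_lineDirections {s : Set E} {x w : E} :
    w ∈ lineDirections s x ↔ ∀ t : ℝ, x + t • w ∈ s := Iff.rfl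

theorem lineDirections_mono {s s' : Set E} (h : s ⊆ s') (x : E) :
    lineDirections s x ⊆ lineDirections s' x := fun _ hw t => h (hw t)

def Convex.linealitySubmodule {s : Set E} (hs : Convex ℝ s) {x : E} (hx : x ∈ s) :
    Submodule ℝ E where
  carrier := lineDirections s x
  zero_mem' t := by simpa using hx
  add_mem' {u v} hu hv t := by
    convert hs (hu (2 * t)) (hv (2 * t)) (a := 1 / 2) (b := 1 / 2) (by norm_num) (by norm_num)
      (by norm_num) using 1
    module
  smul_mem' c w hw t := by
    convert hw (t * c) using 2
    module

theorem AffineEquiv.image_lineDirections (g : E ≃ᵃ[ℝ] E) (s : Set E) (x : E) :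
    g.linear '' lineDirections s x = lineDirections (g '' s) (g x) := by
  have hline : ∀ (y w : E) (t : ℝ), g (y + t • w) = g y + t • g.linear w := fun y w t => by
    rw [add_comm y, ← vadd_eq_add, g.map_vadd, vadd_eq_add, map_smul, add_comm]
  ext w
  constructor
  · rintro ⟨u, hu, rfl⟩ t
    exact hline x u t ▸ mem_image_of_mem g (hu t)
  · intro hw
    refine ⟨g.linear.symm w, fun t => ?_, g.linear.apply_symm_apply w⟩
    rw [← g.injective.mem_set_image, hline, g.linear.apply_symm_apply]
    exact hw t

section Topology

variable [TopologicalSpace E] [IsTopologicalAddGroup E] [ContinuousSMul ℝ E]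

theorem IsClosed.lineDirections_subset_of_convex {s : Set E} (hsc : IsClosed s) (hs : Convex ℝ s)
    {z x : E} (hx : x ∈ s) : lineDirections s z ⊆ lineDirections s x := by
  intro w hw t
  have hmem : ∀ ε ∈ Ioc (0 : ℝ) 1, x + ε • (z - x) + t • w ∈ s := by
    rintro ε ⟨hε, hε1⟩
    convert hs hx (hw (ε⁻¹ * t)) (sub_nonneg.2 hε1) hε.le (sub_add_cancel 1 ε) using 1
    rw [smul_add, smul_smul, mul_inv_cancel_left₀ hε.ne']
    module
  have hlim : Tendsto (fun ε : ℝ => x + ε • (z - x) + t • w) (𝓝[>] 0) (𝓝 (x + t • w)) := by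
    have : Continuous (fun ε : ℝ => x + ε • (z - x) + t • w) := by fun_prop
    simpa using (this.tendsto 0).mono_left nhdsWithin_le_nhds
  exact hsc.mem_of_tendsto hlim (eventually_of_mem (Ioc_mem_nhdsGT one_pos) hmem)

theorem Convex.lineDirections_closure_subset_of_mem_interior {s : Set E} (hs : Convex ℝ s)
    {z x : E} (hx : x ∈ interior s) : lineDirections (closure s) z ⊆ lineDirections s x := by
  intro w hw t
  have hfar : x + (2 * t) • w ∈ closure s :=
    isClosed_closure.lineDirections_subset_of_convex hs.closure
      (subset_closure (interior_subset hx)) hw (2 * t)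
  have hmid : x + t • w ∈ openSegment ℝ x (x + (2 * t) • w) :=
    ⟨1 / 2, 1 / 2, by norm_num, by norm_num, by norm_num, by module⟩
  exact interior_subset (hs.openSegment_interior_closure_subset_interior hx hfar hmid)

theorem IsOpen.lineDirections_eq_of_convex {s : Set E} (hso : IsOpen s) (hs : Convex ℝ s)
    {x y : E} (hx : x ∈ s) (hy : y ∈ s) : lineDirections s x = lineDirections s y := by
  have key : ∀ {x y}, y ∈ s → lineDirections s x ⊆ lineDirections s y := fun hy =>
    (lineDirections_mono subset_closure _).trans
      (hs.lineDirections_closure_subset_of_mem_interior (hso.interior_eq.symm ▸ hy))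
  exact (key hy).antisymm (key hx)

end Topology

/-- A convex open domain `D` in affine `n`-space that is not properly
convex (its closure contains a complete affine line) is foliated by maximal complete
affine subspaces: there is a linear subspace `W` of dimension `≥ 1` such that, through
every point `x ∈ D`, the directions of complete affine lines contained in `D` are exactly
the vectors of `W` (so the leaves `x + W` are the maximal complete affine subspaces and
they partition `D`); moreover `W` (the common boundary subspace at infinity) is invariant
under every affine automorphism preserving `D`. -/
theorem nonproperly_convex_domain_foliated_by_complete_affine_subspaces
    (n : ℕ) (D : Set (EuclideanSpace ℝ (Fin n)))
    (hDo : IsOpen D) (hDc : Convex ℝ D) (hDne : D.Nonempty)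
    (hline : ∃ x v : EuclideanSpace ℝ (Fin n), v ≠ 0 ∧ ∀ t : ℝ, x + t • v ∈ closure D) :
    ∃ W : Submodule ℝ (EuclideanSpace ℝ (Fin n)),
      W ≠ ⊥ ∧
      (∀ x ∈ D, ∀ w : EuclideanSpace ℝ (Fin n), (∀ t : ℝ, x + t • w ∈ D) ↔ w ∈ W) ∧
      ∀ g : EuclideanSpace ℝ (Fin n) ≃ᵃ[ℝ] EuclideanSpace ℝ (Fin n),
        g '' D = D → W.map g.linear.toLinearMap = W := by
  obtain ⟨x₀, hx₀⟩ := hDne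
  obtain ⟨y, v, hv, hyv⟩ := hline
  have hdir : ∀ {x}, x ∈ D → lineDirections D x = lineDirections D x₀ := fun hx =>
    hDo.lineDirections_eq_of_convex hDc hx hx₀
  refine ⟨hDc.linealitySubmodule hx₀, ?_,
    fun x hx w => by rw [← mem_lineDirections, hdir hx]; rfl, ?_⟩
  · exact (Submodule.ne_bot_iff _).2
      ⟨v, hDc.lineDirections_closure_subset_of_mem_interior (hDo.interior_eq.symm ▸ hx₀) hyv, hv⟩
  · intro g hg
    apply SetLike.coe_injective
    change g.linear '' lineDirections D x₀ = lineDirections D x₀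
    rw [g.image_lineDirections, hg, hdir (hg ▸ mem_image_of_mem g hx₀)]
end
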